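/- arXiv:1509.06100 — 2 statements merged into one kernel-verified Lean document; each statement's English description precedes it below -/
import Mathlib

section
/- Let σ(z) = b(z)/a(z) and suppose f(z) = F(σ(z))/a(z) with a(z), a(α) ≠ 0. Then (R(b,a,α)f)(z) = -(R_{σ(α)}(id·F))(σ(z))/(a(α)a(z)), where (id·F)(w) = w·F(w), pointwise wherever σ(z) ≠ σ(α). -/
/-- Generalized resolvent operator `R(a,b,α)`. -/
noncomputable def Rab (a b : ℂ → ℂ) (α : ℂ) (f : ℂ → ℂ) : ℂ → ℂ :=
  fun z => (a z * f z - a α * f α) / (a α * b z - b α * a z)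

/-- Resolvent-like operator `R_u` (pointwise difference quotient). -/
noncomputable def Ru (u : ℂ) (F : ℂ → ℂ) : ℂ → ℂ :=
  fun w => (F w - F u) / (w - u)

theorem mul_sub_mul_eq_mul_mul_div_sub_div {K : Type*} [Field K] {a₁ a₂ : K} (b₁ b₂ : K)
    (h₁ : a₁ ≠ 0) (h₂ : a₂ ≠ 0) :
    a₁ * b₂ - b₁ * a₂ = a₁ * a₂ * (b₂ / a₂ - b₁ / a₁) := by
  field_simp

/- With `σ = b / a`, the numerator of `R(b,a,α) f` at `z` is `(id·F)(σ z) - (id·F)(σ α)`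
and its denominator is `-a(α) a(z) (σ z - σ α)`. -/
theorem Rba_substitution_general (a b F : ℂ → ℂ) (α z : ℂ)
    (haz : a z ≠ 0) (haα : a α ≠ 0) :
    Rab b a α (fun u => F (b u / a u) / a u) z
      = -(Ru (b α / a α) (fun w => w * F w) (b z / a z)) / (a α * a z) := by
  simp only [Rab, Ru]
  rw [mul_div_left_comm (b z), mul_div_left_comm (b α), ← neg_sub (a α * b z),
    mul_sub_mul_eq_mul_mul_div_sub_div _ _ haα haz]
  generalize b z / a z = s, b α / a α = t
  rw [div_neg, neg_div, div_div, mul_comm (s - t)]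
  ring

/-- If `f(z) = F(σ(z))/a(z)` with `σ = b/a`, then
`(R(b,a,α)f)(z) = -(R_{σ(α)}(id·F))(σ(z))/(a(α)a(z))`. -/
theorem Rba_substitution (a b F : ℂ → ℂ) (α z : ℂ)
    (haz : a z ≠ 0) (haα : a α ≠ 0) (hσ : b z / a z ≠ b α / a α) :
    Rab b a α (fun u => F (b u / a u) / a u) z
      = -(Ru (b α / a α) (fun w => w * F w) (b z / a z)) / (a α * a z) :=
  Rba_substitution_general a b F α z haz haα
end

section
/- In the quaternionic setting, for μ in the open half-space ℍ₊ and real α > 0, the slice hyperholomorphic kernel k(p,μ) = (|μ|² + 2Re(μ)p + p²)⁻¹(p + μ) satisfies k(α,μ) = (α + conj(μ))⁻¹ and R_α k(p,μ) = -k(p,μ)·(α + conj(μ))⁻¹ for all p in the domain, where (R_α f)(p) = (p - α)⁻¹(f(p) - f(α)). -/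
open Quaternion

/-- The slice hyperholomorphic kernel of the Hardy space of the half-space. -/
noncomputable def kQ (p q : Quaternion ℝ) : Quaternion ℝ :=
  ((‖q‖ ^ 2 : ℝ) + (2 * q.re : ℝ) * p + p ^ 2)⁻¹ * (p + q)

/-!
The denominator `Q(p) = p² + 2 Re(μ) p + |μ|²` has real coefficients, so it commutes with
`p - α`, and at a real point it factors as `Q(α) = (α + μ)(α + μ̄)`, which gives
`k(α, μ) = (α + μ̄)⁻¹`. Clearing the (commuting) denominators, the formula for `R_α k` becomes
the polynomial identity `(p + μ)(α + μ̄) - Q(p) = -(p - α)(p + μ)`, which holds because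
`μ + μ̄` and `α` are real.
-/

theorem inv_mul_inv_mul_sub_inv_of_mul_sub_eq {D : Type*} [DivisionRing D] {a b x s : D}
    (hba : Commute b a) (ha : a ≠ 0) (hb : b ≠ 0) (hs : s ≠ 0) (h : x * s - a = -(b * x)) :
    b⁻¹ * (a⁻¹ * x - s⁻¹) = -(a⁻¹ * x) * s⁻¹ := by
  have hdiff : a⁻¹ * x - s⁻¹ = b * (-(a⁻¹ * x) * s⁻¹) :=
    calc a⁻¹ * x - s⁻¹ = a⁻¹ * (x * s - a) * s⁻¹ := by
          rw [mul_sub, sub_mul, mul_assoc, mul_inv_cancel_right₀ hs, inv_mul_cancel₀ ha,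
            one_mul]
      _ = b * (-(a⁻¹ * x) * s⁻¹) := by
          rw [h, mul_neg, ← mul_assoc a⁻¹, ← hba.inv_right₀.eq]
          noncomm_ring
  rw [hdiff, inv_mul_cancel_left₀ hb]

noncomputable def kQDenom (μ p : ℍ[ℝ]) : ℍ[ℝ] :=
  (‖μ‖ ^ 2 : ℝ) + (2 * μ.re : ℝ) * p + p ^ 2

theorem kQ_eq_inv_kQDenom_mul (p μ : ℍ[ℝ]) : kQ p μ = (kQDenom μ p)⁻¹ * (p + μ) := rfl

theorem kQDenom_eq (μ p : ℍ[ℝ]) : kQDenom μ p = μ * star μ + (μ + star μ) * p + p ^ 2 := by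
  rw [kQDenom, self_mul_star, self_add_star', normSq_eq_norm_mul_self, sq]

theorem commute_kQDenom (μ p : ℍ[ℝ]) : Commute p (kQDenom μ p) :=
  ((coe_commute _ p).symm.add_right
    ((coe_commute _ p).symm.mul_right (Commute.refl p))).add_right ((Commute.refl p).pow_right 2)

theorem add_mul_add_star_sub_kQDenom (α : ℝ) (μ p : ℍ[ℝ]) :
    (p + μ) * (α + star μ) - kQDenom μ p = -((p - α) * (p + μ)) := by
  have hre : (μ + star μ) * p = p * (μ + star μ) := by rw [self_add_star']; exact coe_commutes _ p
  rw [kQDenom_eq, hre, sub_mul, coe_commutes α (p + μ)]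
  noncomm_ring

theorem kQDenom_coe (α : ℝ) (μ : ℍ[ℝ]) : kQDenom μ α = (α + μ) * (α + star μ) := by
  have h := add_mul_add_star_sub_kQDenom α μ α
  rw [sub_self, zero_mul, neg_zero, sub_eq_zero] at h
  exact h.symm

theorem kQDenom_ne_zero {μ p : ℍ[ℝ]} (hμ : 0 < μ.re) (hp : 0 < p.re) : kQDenom μ p ≠ 0 := by
  intro h
  -- The imaginary part of `Q(p)` is `2 (Re μ + Re p) Im p`, so `p` would be real.
  obtain ⟨hre, hI, hJ, hK⟩ := Quaternion.ext_iff.1 h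
  simp only [kQDenom, sq, re_add, imI_add, imJ_add, imK_add, re_mul, imI_mul, imJ_mul, imK_mul,
    re_coe, imI_coe, imJ_coe, imK_coe, re_zero, imI_zero, imJ_zero, imK_zero] at hre hI hJ hK
  have hc : 0 < 2 * (μ.re + p.re) := by linarith
  have him_eq_zero {y : ℝ} (hy : 2 * (μ.re + p.re) * y = 0) : y = 0 :=
    (mul_eq_zero.1 hy).resolve_left hc.ne'
  have hI0 : p.imI = 0 := him_eq_zero (by linear_combination hI)
  have hJ0 : p.imJ = 0 := him_eq_zero (by linear_combination hJ)
  have hK0 : p.imK = 0 := him_eq_zero (by linear_combination hK)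
  rw [hI0, hJ0, hK0] at hre
  nlinarith [mul_pos hμ hp, mul_pos hp hp, sq_nonneg ‖μ‖]

theorem kQ_coe (α : ℝ) (μ : ℍ[ℝ]) : kQ α μ = (α + star μ)⁻¹ := by
  rw [kQ_eq_inv_kQDenom_mul, kQDenom_coe, mul_inv_rev, mul_assoc]
  by_cases h : (α : ℍ[ℝ]) + μ = 0
  · have hstar : (α : ℍ[ℝ]) + star μ = 0 := by simpa using congrArg star h
    rw [h, hstar, inv_zero, zero_mul]
  · rw [inv_mul_cancel₀ h, mul_one]

/-- For real `α > 0` and `μ ∈ ℍ₊`: `k(α,μ) = (α + conj μ)⁻¹` and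
`R_α k(·,μ) = -k(·,μ)(α + conj μ)⁻¹`. -/
theorem quaternionic_kernel_Ralpha (α : ℝ) (hα : 0 < α) (μ : Quaternion ℝ)
    (hμ : 0 < μ.re) :
    kQ (α : Quaternion ℝ) μ = ((α : Quaternion ℝ) + star μ)⁻¹ ∧
    ∀ p : Quaternion ℝ, 0 < p.re → p ≠ (α : Quaternion ℝ) →
      (p - (α : Quaternion ℝ))⁻¹ * (kQ p μ - kQ (α : Quaternion ℝ) μ)
        = -(kQ p μ) * ((α : Quaternion ℝ) + star μ)⁻¹ := by
  have hs : (α : ℍ[ℝ]) + star μ ≠ 0 := fun h => by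
    have := congrArg (·.re) h
    simp only [re_add, re_coe, re_star, re_zero] at this
    linarith
  refine ⟨kQ_coe α μ, fun p hp hpα => ?_⟩
  rw [kQ_coe, kQ_eq_inv_kQDenom_mul]
  exact inv_mul_inv_mul_sub_inv_of_mul_sub_eq ((commute_kQDenom μ p).sub_left (coe_commute α _))
    (kQDenom_ne_zero hμ hp) (sub_ne_zero.2 hpα) hs (add_mul_add_star_sub_kQDenom α μ p)
end
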